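/- Let (H,α) be a monoidal Hom-Hopf algebra over a commutative ring k and let (M,μ) be a bicovariant (H,α)-Hom-bimodule with right coaction σ(m)=m_[0]⊗m_[1]. Then the map θ: H⊗ᶜᵒᴴM → M, θ(h⊗u)=h·u, is right H-colinear: for all h∈H and u∈ᶜᵒᴴM, σ(h·u) = h₁·u_[0] ⊗ h₂u_[1]; consequently (together with its bijectivity and left-covariant compatibility) θ is an isomorphism of bicovariant (H,α)-Hom-bimodules, where H⊗ᶜᵒᴴM carries the bicovariant structure induced by the right adjoint action u◁h=(S(h₁)·μ⁻¹(u))·α(h₂) and the restricted right coaction. -/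
import Mathlib


open TensorProduct

noncomputable def tmul2 {k A B C D E F : Type*} [CommRing k]
    [AddCommGroup A] [AddCommGroup B] [AddCommGroup C] [AddCommGroup D]
    [AddCommGroup E] [AddCommGroup F]
    [Module k A] [Module k B] [Module k C] [Module k D] [Module k E] [Module k F]
    (f : A →ₗ[k] C →ₗ[k] E) (g : B →ₗ[k] D →ₗ[k] F) :
    (A ⊗[k] B) →ₗ[k] (C ⊗[k] D) →ₗ[k] (E ⊗[k] F) :=
  TensorProduct.curry
    ((TensorProduct.map (TensorProduct.lift f) (TensorProduct.lift g)) ∘ₗ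
      (TensorProduct.tensorTensorTensorComm k A B C D).toLinearMap)

/-- A monoidal Hom-Hopf algebra over a commutative ring `k`. -/
structure MonHomHopf (k H : Type*) [CommRing k] [AddCommGroup H] [Module k H] where
  α : H ≃ₗ[k] H
  mul : H →ₗ[k] H →ₗ[k] H
  one : H
  comul : H →ₗ[k] H ⊗[k] H
  counit : H →ₗ[k] k
  S : H →ₗ[k] H
  alpha_mul : ∀ g h, α (mul g h) = mul (α g) (α h)
  alpha_one : α one = one
  hom_assoc : ∀ g h l, mul (α g) (mul h l) = mul (mul g h) (α l)
  mul_one' : ∀ h, mul h one = α h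
  one_mul' : ∀ h, mul one h = α h
  comul_alpha : ∀ h, comul (α h)
    = TensorProduct.map α.toLinearMap α.toLinearMap (comul h)
  counit_alpha : ∀ h, counit (α h) = counit h
  hom_coassoc : ∀ h,
    (TensorProduct.assoc k H H H) ((TensorProduct.map comul α.symm.toLinearMap) (comul h))
      = (TensorProduct.map α.symm.toLinearMap comul) (comul h)
  counit_comul_left : ∀ h,
    (TensorProduct.lid k H) ((TensorProduct.map counit LinearMap.id) (comul h)) = α.symm h
  counit_comul_right : ∀ h,
    (TensorProduct.rid k H) ((TensorProduct.map LinearMap.id counit) (comul h)) = α.symm h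
  comul_mul : ∀ g h, comul (mul g h) = tmul2 mul mul (comul g) (comul h)
  comul_one : comul one = one ⊗ₜ[k] one
  counit_mul : ∀ g h, counit (mul g h) = counit g * counit h
  counit_one : counit one = 1
  antipode_left : ∀ h,
    (TensorProduct.lift mul) ((TensorProduct.map S LinearMap.id) (comul h)) = counit h • one
  antipode_right : ∀ h,
    (TensorProduct.lift mul) ((TensorProduct.map LinearMap.id S) (comul h)) = counit h • one
  S_alpha : ∀ h, S (α h) = α (S h)

/-- A bicovariant `(H,α)`-Hom-bimodule. -/
structure BicovBimod {k H : Type*} [CommRing k] [AddCommGroup H] [Module k H]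
    (A : MonHomHopf k H) (M : Type*) [AddCommGroup M] [Module k M] where
  μ : M ≃ₗ[k] M
  lact : H →ₗ[k] M →ₗ[k] M
  ract : M →ₗ[k] H →ₗ[k] M
  lact_assoc : ∀ g h m, lact (A.α g) (lact h m) = lact (A.mul g h) (μ m)
  lact_one : ∀ m, lact A.one m = μ m
  mu_lact : ∀ h m, μ (lact h m) = lact (A.α h) (μ m)
  ract_assoc : ∀ m g h, ract (μ m) (A.mul g h) = ract (ract m g) (A.α h)
  ract_one : ∀ m, ract m A.one = μ m
  mu_ract : ∀ m h, μ (ract m h) = ract (μ m) (A.α h)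
  bimod : ∀ h m g, ract (lact h m) (A.α g) = lact (A.α h) (ract m g)
  rho : M →ₗ[k] H ⊗[k] M
  rho_coassoc : ∀ m,
    (TensorProduct.map (LinearMap.id : H →ₗ[k] H) rho) (rho m)
      = (TensorProduct.assoc k H H M)
          ((TensorProduct.map
              ((TensorProduct.map A.α.toLinearMap (LinearMap.id : H →ₗ[k] H)) ∘ₗ A.comul)
              μ.symm.toLinearMap) (rho m))
  rho_counit : ∀ m,
    (TensorProduct.lid k M) ((TensorProduct.map A.counit (LinearMap.id : M →ₗ[k] M)) (rho m))
      = μ.symm m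
  rho_mu : ∀ m, rho (μ m) = TensorProduct.map A.α.toLinearMap μ.toLinearMap (rho m)
  rho_cov : ∀ h g m,
    rho (ract (lact h m) (A.α g))
      = tmul2 A.mul lact (A.comul (A.α h)) (tmul2 A.mul ract (rho m) (A.comul g))
  sigma : M →ₗ[k] M ⊗[k] H
  sigma_coassoc : ∀ m,
    (TensorProduct.map sigma A.α.symm.toLinearMap) (sigma m)
      = (TensorProduct.assoc k M H H).symm
          ((TensorProduct.map μ.symm.toLinearMap A.comul) (sigma m))
  sigma_counit : ∀ m,
    (TensorProduct.rid k M) ((TensorProduct.map (LinearMap.id : M →ₗ[k] M) A.counit) (sigma m))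
      = μ.symm m
  sigma_mu : ∀ m, sigma (μ m) = TensorProduct.map μ.toLinearMap A.α.toLinearMap (sigma m)
  sigma_cov : ∀ h g m,
    sigma (ract (lact h m) (A.α g))
      = tmul2 lact A.mul (A.comul (A.α h)) (tmul2 ract A.mul (sigma m) (A.comul g))
  homcomm : ∀ m,
    (TensorProduct.map (LinearMap.id : H →ₗ[k] H) sigma) (rho m)
      = (TensorProduct.assoc k H M H)
          ((TensorProduct.map
              ((TensorProduct.map A.α.toLinearMap (LinearMap.id : M →ₗ[k] M)) ∘ₗ rho)
              A.α.symm.toLinearMap) (sigma m))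

/-- The submodule of left Hom-coinvariants of a bicovariant Hom-bimodule. -/
noncomputable def BicovBimod.coinv {k H : Type*} [CommRing k] [AddCommGroup H] [Module k H]
    {A : MonHomHopf k H} {M : Type*} [AddCommGroup M] [Module k M]
    (B : BicovBimod A M) : Submodule k M where
  carrier := {m | B.rho m = A.one ⊗ₜ[k] (B.μ.symm m)}
  add_mem' := by
    intro a b ha hb
    simp only [Set.mem_setOf_eq] at *
    rw [map_add, ha, hb, map_add, TensorProduct.tmul_add]
  zero_mem' := by
    simp only [Set.mem_setOf_eq, map_zero, TensorProduct.tmul_zero]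
  smul_mem' := by
    intro c x hx
    simp only [Set.mem_setOf_eq] at *
    rw [map_smul, hx, map_smul, TensorProduct.tmul_smul]

/-- The canonical map `θ : H ⊗ ᶜᵒᴴM → M`, `θ(h ⊗ u) = h · u`. -/
noncomputable def BicovBimod.theta {k H : Type*} [CommRing k] [AddCommGroup H] [Module k H]
    {A : MonHomHopf k H} {M : Type*} [AddCommGroup M] [Module k M]
    (B : BicovBimod A M) : (H ⊗[k] ↥(B.coinv)) →ₗ[k] M :=
  TensorProduct.lift (B.lact.compl₂ (B.coinv).subtype)

namespace ThetaProofAux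

open TensorProduct LinearMap

variable {k H : Type*} [CommRing k] [AddCommGroup H] [Module k H]

@[simp] lemma tmul2_tmul {k A B C D E F : Type*} [CommRing k]
    [AddCommGroup A] [AddCommGroup B] [AddCommGroup C] [AddCommGroup D]
    [AddCommGroup E] [AddCommGroup F]
    [Module k A] [Module k B] [Module k C] [Module k D] [Module k E] [Module k F]
    (f : A →ₗ[k] C →ₗ[k] E) (g : B →ₗ[k] D →ₗ[k] F) (a : A) (b : B) (c : C) (d : D) :
    tmul2 f g (a ⊗ₜ[k] b) (c ⊗ₜ[k] d) = f a c ⊗ₜ[k] g b d := by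
  simp [tmul2]

lemma map_symm_map {k : Type*} [CommRing k] {P P' Q Q' : Type*}
    [AddCommGroup P] [Module k P] [AddCommGroup P'] [Module k P']
    [AddCommGroup Q] [Module k Q] [AddCommGroup Q'] [Module k Q']
    (e : P ≃ₗ[k] P') (f : Q ≃ₗ[k] Q') (z : P ⊗[k] Q) :
    map e.symm.toLinearMap f.symm.toLinearMap (map e.toLinearMap f.toLinearMap z) = z := by
  induction z using TensorProduct.induction_on with
  | zero => simp
  | tmul => simp
  | add x y hx hy => rw [map_add, map_add, hx, hy]

lemma map_apply_map {k : Type*} [CommRing k] {P P' P'' Q Q' Q'' : Type*}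
    [AddCommGroup P] [Module k P] [AddCommGroup P'] [Module k P'] [AddCommGroup P''] [Module k P'']
    [AddCommGroup Q] [Module k Q] [AddCommGroup Q'] [Module k Q'] [AddCommGroup Q''] [Module k Q'']
    (f₁ : P →ₗ[k] P') (f₂ : P' →ₗ[k] P'') (g₁ : Q →ₗ[k] Q') (g₂ : Q' →ₗ[k] Q'') (z : P ⊗[k] Q) :
    map f₂ g₂ (map f₁ g₁ z) = map (f₂ ∘ₗ f₁) (g₂ ∘ₗ g₁) z := by
  induction z using TensorProduct.induction_on with
  | zero => simp
  | tmul => simp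
  | add x y hx hy => rw [map_add, map_add, map_add, hx, hy]

lemma map_equiv_cancel {k : Type*} [CommRing k] {P P' Q Q' : Type*}
    [AddCommGroup P] [Module k P] [AddCommGroup P'] [Module k P']
    [AddCommGroup Q] [Module k Q] [AddCommGroup Q'] [Module k Q']
    (e : P ≃ₗ[k] P') (f : Q ≃ₗ[k] Q') {x y : P ⊗[k] Q}
    (h : map e.toLinearMap f.toLinearMap x = map e.toLinearMap f.toLinearMap y) : x = y := by
  have := congrArg (map e.symm.toLinearMap f.symm.toLinearMap) h
  rwa [map_symm_map, map_symm_map] at this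

variable (A : MonHomHopf k H)

lemma alpha_comp : A.α.toLinearMap ∘ₗ A.α.symm.toLinearMap = LinearMap.id := by
  ext x; simp

lemma alpha_comp' : A.α.symm.toLinearMap ∘ₗ A.α.toLinearMap = LinearMap.id := by
  ext x; simp

lemma alpha_one_inv : A.α.symm A.one = A.one := by
  apply A.α.injective
  rw [LinearEquiv.apply_symm_apply, A.alpha_one]

lemma mul_alpha_inv (g h : H) :
    A.α.symm (A.mul g h) = A.mul (A.α.symm g) (A.α.symm h) := by
  apply A.α.injective
  rw [A.alpha_mul]; simp

lemma S_alpha_inv (h : H) : A.S (A.α.symm h) = A.α.symm (A.S h) := by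
  apply A.α.injective
  rw [← A.S_alpha]; simp

lemma comul_alpha_inv (h : H) :
    A.comul (A.α.symm h) = map A.α.symm.toLinearMap A.α.symm.toLinearMap (A.comul h) := by
  apply map_equiv_cancel A.α A.α
  rw [← A.comul_alpha, LinearEquiv.apply_symm_apply]
  exact (map_symm_map A.α.symm A.α.symm (A.comul h)).symm

lemma T1 (h : H) :
    map A.comul LinearMap.id (A.comul h)
      = map LinearMap.id A.α.toLinearMap
          ((TensorProduct.assoc k H H H).symm
            (map A.α.symm.toLinearMap A.comul (A.comul h))) := by
  have h1 := A.hom_coassoc h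
  have h2 : map A.comul A.α.symm.toLinearMap (A.comul h)
      = (TensorProduct.assoc k H H H).symm (map A.α.symm.toLinearMap A.comul (A.comul h)) := by
    rw [LinearEquiv.eq_symm_apply]; exact h1
  rw [← h2, map_apply_map, alpha_comp, LinearMap.id_comp]

lemma V2 (h : H) :
    map LinearMap.id A.comul (A.comul h)
      = TensorProduct.assoc k H H H
          (map ((map A.α.toLinearMap LinearMap.id) ∘ₗ A.comul) A.α.symm.toLinearMap
            (A.comul h)) := by
  have h1 := A.hom_coassoc h
  calc map LinearMap.id A.comul (A.comul h)
      = map A.α.toLinearMap (map LinearMap.id LinearMap.id)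
          (map A.α.symm.toLinearMap A.comul (A.comul h)) := by
        rw [map_apply_map, alpha_comp, TensorProduct.map_id, LinearMap.id_comp]
    _ = map A.α.toLinearMap (map LinearMap.id LinearMap.id)
          (TensorProduct.assoc k H H H (map A.comul A.α.symm.toLinearMap (A.comul h))) := by
        rw [h1]
    _ = TensorProduct.assoc k H H H
          (map (map A.α.toLinearMap LinearMap.id) LinearMap.id
            (map A.comul A.α.symm.toLinearMap (A.comul h))) := by
        rw [TensorProduct.map_map_assoc]
    _ = _ := by
        rw [map_apply_map, LinearMap.id_comp]

end ThetaProofAux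
namespace ThetaProofAux

open TensorProduct LinearMap

variable {k H : Type*} [CommRing k] [AddCommGroup H] [Module k H] (A : MonHomHopf k H)

noncomputable def m2 : (H ⊗[k] H) →ₗ[k] (H ⊗[k] H) →ₗ[k] (H ⊗[k] H) := tmul2 A.mul A.mul

lemma m2_tmul (a b c d : H) :
    m2 A (a ⊗ₜ[k] b) (c ⊗ₜ[k] d) = A.mul a c ⊗ₜ[k] A.mul b d := tmul2_tmul _ _ _ _ _ _

lemma m2_one_right (x : H ⊗[k] H) :
    m2 A x (A.one ⊗ₜ[k] A.one) = map A.α.toLinearMap A.α.toLinearMap x := by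
  induction x using TensorProduct.induction_on with
  | zero => simp
  | tmul a b => simp [m2_tmul, A.mul_one']
  | add x y hx hy => rw [map_add, LinearMap.add_apply, map_add, hx, hy]

lemma m2_one_left (x : H ⊗[k] H) :
    m2 A (A.one ⊗ₜ[k] A.one) x = map A.α.toLinearMap A.α.toLinearMap x := by
  induction x using TensorProduct.induction_on with
  | zero => simp
  | tmul a b => simp [m2_tmul, A.one_mul']
  | add x y hx hy => rw [map_add, map_add, hx, hy]

lemma hom_assoc2 (x y z : H ⊗[k] H) :
    m2 A (m2 A x y) (map A.α.toLinearMap A.α.toLinearMap z)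
      = m2 A (map A.α.toLinearMap A.α.toLinearMap x) (m2 A y z) := by
  induction x using TensorProduct.induction_on with
  | zero => simp
  | add x x' hx hx' => simp only [map_add, LinearMap.map_add, LinearMap.add_apply, hx, hx']
  | tmul a b =>
    induction y using TensorProduct.induction_on with
    | zero => simp
    | add y y' hy hy' => simp only [map_add, LinearMap.map_add, LinearMap.add_apply, hy, hy']
    | tmul c d =>
      induction z using TensorProduct.induction_on with
      | zero => simp
      | add z z' hz hz' => simp only [map_add, LinearMap.map_add, LinearMap.add_apply, hz, hz']
      | tmul p q => simp [m2_tmul, A.hom_assoc]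

noncomputable def conv (f g : H →ₗ[k] H ⊗[k] H) : H →ₗ[k] H ⊗[k] H :=
  TensorProduct.lift (m2 A) ∘ₗ map f g ∘ₗ A.comul

noncomputable def uu : H →ₗ[k] H ⊗[k] H := A.counit.smulRight (A.one ⊗ₜ[k] A.one)

lemma uu_apply (h : H) : uu A h = A.counit h • (A.one ⊗ₜ[k] A.one) := rfl

lemma conv_apply (f g : H →ₗ[k] H ⊗[k] H) (h : H) :
    conv A f g h = TensorProduct.lift (m2 A) (map f g (A.comul h)) := rfl

lemma conv_unit_right (f : H →ₗ[k] H ⊗[k] H)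
    (hf : ∀ h, f (A.α h) = map A.α.toLinearMap A.α.toLinearMap (f h)) :
    conv A f (uu A) = f := by
  ext h
  have key : ∀ t : H ⊗[k] H,
      TensorProduct.lift (m2 A) (map f (uu A) t)
        = map A.α.toLinearMap A.α.toLinearMap
            (f ((TensorProduct.rid k H) ((map LinearMap.id A.counit) t))) := by
    intro t
    induction t using TensorProduct.induction_on with
    | zero => simp
    | tmul a b =>
      simp [uu_apply, m2_one_right, rid_tmul, map_smul]
    | add x y hx hy => simp only [map_add, hx, hy, LinearEquiv.map_add]
  have h2 := key (A.comul h)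
  rw [A.counit_comul_right] at h2
  rw [conv_apply, h2, ← hf, LinearEquiv.apply_symm_apply]

lemma conv_unit_left (g : H →ₗ[k] H ⊗[k] H)
    (hg : ∀ h, g (A.α h) = map A.α.toLinearMap A.α.toLinearMap (g h)) :
    conv A (uu A) g = g := by
  ext h
  have key : ∀ t : H ⊗[k] H,
      TensorProduct.lift (m2 A) (map (uu A) g t)
        = map A.α.toLinearMap A.α.toLinearMap
            (g ((TensorProduct.lid k H) ((map A.counit LinearMap.id) t))) := by
    intro t
    induction t using TensorProduct.induction_on with
    | zero => simp
    | tmul a b =>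
      simp [uu_apply, m2_one_left, lid_tmul, map_smul]
    | add x y hx hy => simp only [map_add, hx, hy, LinearEquiv.map_add]
  have h2 := key (A.comul h)
  rw [A.counit_comul_left] at h2
  rw [conv_apply, h2, ← hg, LinearEquiv.apply_symm_apply]

lemma conv_FS : conv A (A.comul ∘ₗ A.S) A.comul = uu A := by
  ext h
  have key : ∀ t : H ⊗[k] H,
      TensorProduct.lift (m2 A) (map (A.comul ∘ₗ A.S) A.comul t)
        = A.comul (TensorProduct.lift A.mul (map A.S LinearMap.id t)) := by
    intro t
    induction t using TensorProduct.induction_on with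
    | zero => simp
    | tmul a b =>
      simp only [map_tmul, LinearMap.comp_apply, lift.tmul, LinearMap.id_apply]
      rw [A.comul_mul]
      rfl
    | add x y hx hy => simp only [map_add, hx, hy]
  have h2 := key (A.comul h)
  rw [A.antipode_left, map_smul, A.comul_one] at h2
  rw [conv_apply, h2, uu_apply]

lemma conv_assoc (f g e : H →ₗ[k] H ⊗[k] H)
    (hf : ∀ h, f (A.α h) = map A.α.toLinearMap A.α.toLinearMap (f h))
    (he : ∀ h, e (A.α h) = map A.α.toLinearMap A.α.toLinearMap (e h)) :
    conv A (conv A f g) e = conv A f (conv A g e) := by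
  ext h
  have lhs : conv A (conv A f g) e h
      = (TensorProduct.lift (m2 A) ∘ₗ map (TensorProduct.lift (m2 A) ∘ₗ map f g) e)
          (map A.comul LinearMap.id (A.comul h)) := by
    rw [conv_apply, LinearMap.comp_apply, conv]
    rw [show (TensorProduct.lift (m2 A) ∘ₗ map f g ∘ₗ A.comul) = ((TensorProduct.lift (m2 A) ∘ₗ map f g) ∘ₗ A.comul) from rfl]
    rw [show map ((TensorProduct.lift (m2 A) ∘ₗ map f g) ∘ₗ A.comul) e (A.comul h)
        = map (TensorProduct.lift (m2 A) ∘ₗ map f g) e (map A.comul LinearMap.id (A.comul h)) from by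
      rw [map_apply_map, LinearMap.comp_id]]
  have rhs : conv A f (conv A g e) h
      = (TensorProduct.lift (m2 A) ∘ₗ map f (TensorProduct.lift (m2 A) ∘ₗ map g e))
          (map LinearMap.id A.comul (A.comul h)) := by
    rw [conv_apply, LinearMap.comp_apply, conv]
    rw [show (TensorProduct.lift (m2 A) ∘ₗ map g e ∘ₗ A.comul) = ((TensorProduct.lift (m2 A) ∘ₗ map g e) ∘ₗ A.comul) from rfl]
    rw [show map f ((TensorProduct.lift (m2 A) ∘ₗ map g e) ∘ₗ A.comul) (A.comul h)
        = map f (TensorProduct.lift (m2 A) ∘ₗ map g e) (map LinearMap.id A.comul (A.comul h)) from by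
      rw [map_apply_map, LinearMap.comp_id]]
  rw [lhs, rhs, V2]
  rw [show (map ((map A.α.toLinearMap LinearMap.id) ∘ₗ A.comul) A.α.symm.toLinearMap) (A.comul h)
      = map (map A.α.toLinearMap LinearMap.id) A.α.symm.toLinearMap
          (map A.comul LinearMap.id (A.comul h)) from by
    rw [map_apply_map, LinearMap.comp_id]]
  have key : (TensorProduct.lift (m2 A) ∘ₗ map (TensorProduct.lift (m2 A) ∘ₗ map f g) e)
      = (TensorProduct.lift (m2 A) ∘ₗ map f (TensorProduct.lift (m2 A) ∘ₗ map g e)) ∘ₗ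
          ((TensorProduct.assoc k H H H).toLinearMap ∘ₗ
            map (map A.α.toLinearMap LinearMap.id) A.α.symm.toLinearMap) := by
    apply TensorProduct.ext_threefold
    intro p q r
    simp only [LinearMap.comp_apply, map_tmul, lift.tmul, LinearEquiv.coe_coe, assoc_tmul,
      LinearMap.id_apply]
    rw [hf]
    rw [show e r = map A.α.toLinearMap A.α.toLinearMap (e (A.α.symm r)) from by
      rw [← he, LinearEquiv.apply_symm_apply]]
    rw [hom_assoc2]
  have := DFunLike.congr_fun key (map A.comul LinearMap.id (A.comul h))
  simpa using this

end ThetaProofAux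
namespace ThetaProofAux

open TensorProduct LinearMap

variable {k H : Type*} [CommRing k] [AddCommGroup H] [Module k H] (A : MonHomHopf k H)

noncomputable def Gm : H →ₗ[k] H ⊗[k] H :=
  (TensorProduct.comm k H H).toLinearMap ∘ₗ map A.S A.S ∘ₗ A.comul

lemma Gm_apply (h : H) :
    Gm A h = (TensorProduct.comm k H H) (map A.S A.S (A.comul h)) := rfl

lemma comm_map_apply {P Q P' Q' : Type*}
    [AddCommGroup P] [Module k P] [AddCommGroup P'] [Module k P']
    [AddCommGroup Q] [Module k Q] [AddCommGroup Q'] [Module k Q']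
    (f : P →ₗ[k] P') (g : Q →ₗ[k] Q') (z : P ⊗[k] Q) :
    TensorProduct.comm k P' Q' (map f g z) = map g f (TensorProduct.comm k P Q z) := by
  induction z using TensorProduct.induction_on with
  | zero => simp
  | tmul => simp
  | add x y hx hy => simp only [map_add, LinearEquiv.map_add, hx, hy]

lemma comul_comp_alpha :
    A.comul ∘ₗ A.α.toLinearMap = (map A.α.toLinearMap A.α.toLinearMap) ∘ₗ A.comul := by
  apply LinearMap.ext; intro g
  simp [A.comul_alpha]

lemma S_comp_alpha : A.S ∘ₗ A.α.toLinearMap = A.α.toLinearMap ∘ₗ A.S := by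
  apply LinearMap.ext; intro g
  simp [A.S_alpha]

lemma S_comp_alpha_inv : A.S ∘ₗ A.α.symm.toLinearMap = A.α.symm.toLinearMap ∘ₗ A.S := by
  apply LinearMap.ext; intro g
  simp [S_alpha_inv]

lemma F_compat (h : H) :
    (A.comul ∘ₗ A.S) (A.α h)
      = map A.α.toLinearMap A.α.toLinearMap ((A.comul ∘ₗ A.S) h) := by
  simp [A.S_alpha, A.comul_alpha]

lemma comul_compat (h : H) :
    A.comul (A.α h) = map A.α.toLinearMap A.α.toLinearMap (A.comul h) := A.comul_alpha h

lemma Gm_compat (h : H) :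
    Gm A (A.α h) = map A.α.toLinearMap A.α.toLinearMap (Gm A h) := by
  simp only [Gm, LinearMap.comp_apply, LinearEquiv.coe_coe, A.comul_alpha]
  rw [map_apply_map, S_comp_alpha]
  rw [show (map (A.α.toLinearMap ∘ₗ A.S) (A.α.toLinearMap ∘ₗ A.S)) (A.comul h)
      = map A.α.toLinearMap A.α.toLinearMap (map A.S A.S (A.comul h)) from
    (map_apply_map _ _ _ _ _).symm]
  rw [comm_map_apply]

lemma lift_mul_alphai (z : H ⊗[k] H) :
    TensorProduct.lift A.mul (map A.α.symm.toLinearMap A.α.symm.toLinearMap z)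
      = A.α.symm (TensorProduct.lift A.mul z) := by
  induction z using TensorProduct.induction_on with
  | zero => simp
  | tmul a b => simp [mul_alpha_inv]
  | add x y hx hy => simp only [map_add, LinearEquiv.map_add, hx, hy]

lemma nat3 {P Q R S : Type*}
    [AddCommGroup P] [Module k P] [AddCommGroup Q] [Module k Q]
    [AddCommGroup R] [Module k R] [AddCommGroup S] [Module k S]
    (F : R →ₗ[k] S) (w : P ⊗[k] (Q ⊗[k] R)) :
    map LinearMap.id F ((TensorProduct.assoc k P Q R).symm w)
      = (TensorProduct.assoc k P Q S).symm (map LinearMap.id (map LinearMap.id F) w) := by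
  have h1 := TensorProduct.map_map_comp_assoc_symm_eq (R := k)
    (f := (LinearMap.id : P →ₗ[k] P)) (g := (LinearMap.id : Q →ₗ[k] Q)) (h := F)
  have h2 := DFunLike.congr_fun h1 w
  simpa [TensorProduct.map_id] using h2

lemma Theta_eq :
    (map (LinearMap.id : H →ₗ[k] H) ((map A.α.toLinearMap A.α.toLinearMap) ∘ₗ A.comul)) ∘ₗ A.comul
      = (TensorProduct.assoc k H H H).toLinearMap ∘ₗ
          (map ((map A.α.toLinearMap A.α.toLinearMap) ∘ₗ A.comul) LinearMap.id) ∘ₗ A.comul := by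
  apply LinearMap.ext; intro g
  simp only [LinearMap.comp_apply, LinearEquiv.coe_coe]
  rw [show map LinearMap.id ((map A.α.toLinearMap A.α.toLinearMap) ∘ₗ A.comul) (A.comul g)
      = map LinearMap.id (map A.α.toLinearMap A.α.toLinearMap)
          (map LinearMap.id A.comul (A.comul g)) from by
    rw [map_apply_map, LinearMap.id_comp]]
  rw [V2 A g]
  rw [show map LinearMap.id (map A.α.toLinearMap A.α.toLinearMap)
        ((TensorProduct.assoc k H H H)
          (map ((map A.α.toLinearMap LinearMap.id) ∘ₗ A.comul) A.α.symm.toLinearMap (A.comul g)))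
      = (TensorProduct.assoc k H H H)
          (map (map LinearMap.id A.α.toLinearMap) A.α.toLinearMap
            (map ((map A.α.toLinearMap LinearMap.id) ∘ₗ A.comul) A.α.symm.toLinearMap
              (A.comul g))) from by
    rw [TensorProduct.map_map_assoc]]
  rw [map_apply_map]
  congr 1
  rw [show (map LinearMap.id A.α.toLinearMap) ∘ₗ ((map A.α.toLinearMap LinearMap.id) ∘ₗ A.comul)
      = ((map LinearMap.id A.α.toLinearMap) ∘ₗ (map A.α.toLinearMap LinearMap.id)) ∘ₗ A.comul from rfl]
  rw [← TensorProduct.map_comp, LinearMap.id_comp, LinearMap.comp_id, alpha_comp]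

lemma conv_comul_Gm : conv A A.comul (Gm A) = uu A := by
  ext h
  rw [conv_apply]
  rw [show map A.comul (Gm A) (A.comul h)
      = map LinearMap.id ((TensorProduct.comm k H H).toLinearMap ∘ₗ map A.S A.S)
          (map A.comul A.comul (A.comul h)) from by
    rw [map_apply_map, LinearMap.id_comp]; rfl]
  rw [show map A.comul A.comul (A.comul h)
      = map LinearMap.id A.comul (map A.comul LinearMap.id (A.comul h)) from by
    rw [map_apply_map, LinearMap.id_comp, LinearMap.comp_id]]
  rw [T1 A h]
  rw [show map LinearMap.id A.comul (map LinearMap.id A.α.toLinearMap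
        ((TensorProduct.assoc k H H H).symm (map A.α.symm.toLinearMap A.comul (A.comul h))))
      = map LinearMap.id ((map A.α.toLinearMap A.α.toLinearMap) ∘ₗ A.comul)
          ((TensorProduct.assoc k H H H).symm
            (map A.α.symm.toLinearMap A.comul (A.comul h))) from by
    rw [map_apply_map, LinearMap.id_comp, comul_comp_alpha]]
  rw [show map A.α.symm.toLinearMap A.comul (A.comul h)
      = map A.α.symm.toLinearMap LinearMap.id (map LinearMap.id A.comul (A.comul h)) from by
    rw [map_apply_map, LinearMap.comp_id, LinearMap.id_comp]]
  rw [nat3]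
  rw [show map LinearMap.id (map LinearMap.id ((map A.α.toLinearMap A.α.toLinearMap) ∘ₗ A.comul))
        (map A.α.symm.toLinearMap LinearMap.id (map LinearMap.id A.comul (A.comul h)))
      = map A.α.symm.toLinearMap
          (((map LinearMap.id ((map A.α.toLinearMap A.α.toLinearMap) ∘ₗ A.comul)) ∘ₗ A.comul))
          (A.comul h) from by
    rw [map_apply_map, map_apply_map]
    simp only [LinearMap.id_comp, LinearMap.comp_id]]
  rw [Theta_eq]
  rw [show map A.α.symm.toLinearMap
        ((TensorProduct.assoc k H H H).toLinearMap ∘ₗ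
          (map ((map A.α.toLinearMap A.α.toLinearMap) ∘ₗ A.comul) LinearMap.id) ∘ₗ A.comul)
        (A.comul h)
      = map A.α.symm.toLinearMap
          ((TensorProduct.assoc k H H H).toLinearMap ∘ₗ
            (map ((map A.α.toLinearMap A.α.toLinearMap) ∘ₗ A.comul) LinearMap.id))
          (map LinearMap.id A.comul (A.comul h)) from by
    rw [map_apply_map, LinearMap.comp_id]; rfl]
  -- now the general evaluation lemma
  have OMEGA : ∀ t : H ⊗[k] (H ⊗[k] H),
      TensorProduct.lift (m2 A)
        (map LinearMap.id ((TensorProduct.comm k H H).toLinearMap ∘ₗ map A.S A.S)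
          ((TensorProduct.assoc k H H (H ⊗[k] H)).symm
            (map A.α.symm.toLinearMap
              ((TensorProduct.assoc k H H H).toLinearMap ∘ₗ
                (map ((map A.α.toLinearMap A.α.toLinearMap) ∘ₗ A.comul) LinearMap.id)) t)))
        = (TensorProduct.lift A.mul (map A.α.symm.toLinearMap A.S
            (map LinearMap.id
              ((TensorProduct.lid k H).toLinearMap ∘ₗ (map A.counit LinearMap.id)) t)))
          ⊗ₜ[k] A.one := by
    intro t
    induction t using TensorProduct.induction_on with
    | zero => simp
    | add x y hx hy => simp only [map_add, LinearEquiv.map_add, hx, hy, TensorProduct.add_tmul]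
    | tmul a w =>
      induction w using TensorProduct.induction_on with
      | zero => simp
      | add x y hx hy =>
        simp only [TensorProduct.tmul_add, map_add, LinearEquiv.map_add, hx, hy,
          TensorProduct.add_tmul]
      | tmul b c =>
        have sub : ∀ s : H ⊗[k] H,
            TensorProduct.lift (m2 A)
              (map LinearMap.id ((TensorProduct.comm k H H).toLinearMap ∘ₗ map A.S A.S)
                ((TensorProduct.assoc k H H (H ⊗[k] H)).symm
                  ((A.α.symm a) ⊗ₜ[k]
                    ((TensorProduct.assoc k H H H)
                      ((map A.α.toLinearMap A.α.toLinearMap s) ⊗ₜ[k] c)))))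
            = (A.mul (A.α.symm a) (A.S c)) ⊗ₜ[k]
                (A.α (TensorProduct.lift A.mul (map LinearMap.id A.S s))) := by
          intro s
          induction s using TensorProduct.induction_on with
          | zero => simp
          | add x y hx hy =>
            simp only [map_add, TensorProduct.add_tmul, TensorProduct.tmul_add,
              LinearEquiv.map_add, hx, hy]
          | tmul p q =>
            simp only [map_tmul, LinearMap.id_apply, assoc_tmul, assoc_symm_tmul,
              LinearMap.comp_apply, LinearEquiv.coe_coe, comm_tmul, lift.tmul, m2_tmul]
            rw [A.alpha_mul, ← A.S_alpha]
        simp only [map_tmul, LinearMap.comp_apply, LinearEquiv.coe_coe, LinearMap.id_apply]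
        rw [sub (A.comul b), A.antipode_right, map_smul, A.alpha_one, lid_tmul]
        rw [LinearMap.map_smul A.S, TensorProduct.tmul_smul, TensorProduct.tmul_smul,
          LinearMap.map_smul, lift.tmul, TensorProduct.smul_tmul']
  rw [OMEGA (map LinearMap.id A.comul (A.comul h))]
  rw [show map LinearMap.id ((TensorProduct.lid k H).toLinearMap ∘ₗ (map A.counit LinearMap.id))
        (map LinearMap.id A.comul (A.comul h))
      = map LinearMap.id A.α.symm.toLinearMap (A.comul h) from by
    rw [map_apply_map, LinearMap.id_comp]
    have hmap : ((TensorProduct.lid k H).toLinearMap ∘ₗ (map A.counit LinearMap.id)) ∘ₗ A.comul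
        = A.α.symm.toLinearMap := by
      apply LinearMap.ext; intro g
      exact A.counit_comul_left g
    rw [hmap]]
  rw [show map A.α.symm.toLinearMap A.S (map LinearMap.id A.α.symm.toLinearMap (A.comul h))
      = map A.α.symm.toLinearMap A.α.symm.toLinearMap (map LinearMap.id A.S (A.comul h)) from by
    rw [map_apply_map, map_apply_map]
    simp only [LinearMap.comp_id, LinearMap.id_comp]
    rw [S_comp_alpha_inv]]
  rw [lift_mul_alphai, A.antipode_right, map_smul, alpha_one_inv, uu_apply,
    TensorProduct.smul_tmul']

lemma comul_S_eq_Gm : A.comul ∘ₗ A.S = Gm A := by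
  have h1 : A.comul ∘ₗ A.S = conv A (A.comul ∘ₗ A.S) (uu A) :=
    (conv_unit_right A _ (F_compat A)).symm
  rw [h1, ← conv_comul_Gm A,
    ← conv_assoc A _ _ _ (F_compat A) (Gm_compat A), conv_FS A,
    conv_unit_left A _ (Gm_compat A)]

lemma comul_S (h : H) :
    A.comul (A.S h) = (TensorProduct.comm k H H) (map A.S A.S (A.comul h)) := by
  have := DFunLike.congr_fun (comul_S_eq_Gm A) h
  simpa [Gm] using this

end ThetaProofAux
namespace ThetaProofAux

open TensorProduct LinearMap

variable {k H : Type*} [CommRing k] [AddCommGroup H] [Module k H] (A : MonHomHopf k H)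
variable {M : Type*} [AddCommGroup M] [Module k M] (B : BicovBimod A M)

lemma t2_ract_one (t : H ⊗[k] M) :
    tmul2 A.mul B.ract t (A.one ⊗ₜ[k] A.one) = map A.α.toLinearMap B.μ.toLinearMap t := by
  induction t using TensorProduct.induction_on with
  | zero => simp
  | tmul a x => simp [A.mul_one', B.ract_one]
  | add x y hx hy => simp only [map_add, LinearMap.map_add, LinearMap.add_apply, hx, hy]

lemma t2_mul_lact_alpha (s : H ⊗[k] H) (t : H ⊗[k] M) :
    tmul2 A.mul B.lact (map A.α.toLinearMap A.α.toLinearMap s) (map A.α.toLinearMap B.μ.toLinearMap t)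
      = map A.α.toLinearMap B.μ.toLinearMap (tmul2 A.mul B.lact s t) := by
  induction s using TensorProduct.induction_on with
  | zero => simp
  | add x y hx hy => simp only [map_add, LinearMap.map_add, LinearMap.add_apply, hx, hy]
  | tmul a b =>
    induction t using TensorProduct.induction_on with
    | zero => simp
    | add x y hx hy => simp only [map_add, LinearMap.map_add, LinearMap.add_apply, hx, hy]
    | tmul c x => simp [← A.alpha_mul, ← B.mu_lact]

lemma rho_lact (g : H) (m : M) :
    B.rho (B.lact g m) = tmul2 A.mul B.lact (A.comul g) (B.rho m) := by
  apply map_equiv_cancel A.α B.μ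
  have hc := B.rho_cov g A.one m
  rw [A.alpha_one, B.ract_one, B.rho_mu, A.comul_one, t2_ract_one, A.comul_alpha,
    t2_mul_lact_alpha] at hc
  exact hc

lemma t2_ract_one' (t : M ⊗[k] H) :
    tmul2 B.ract A.mul t (A.one ⊗ₜ[k] A.one) = map B.μ.toLinearMap A.α.toLinearMap t := by
  induction t using TensorProduct.induction_on with
  | zero => simp
  | tmul x a => simp [A.mul_one', B.ract_one]
  | add x y hx hy => simp only [map_add, LinearMap.map_add, LinearMap.add_apply, hx, hy]

lemma t2_lact_mul_alpha (s : H ⊗[k] H) (t : M ⊗[k] H) :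
    tmul2 B.lact A.mul (map A.α.toLinearMap A.α.toLinearMap s) (map B.μ.toLinearMap A.α.toLinearMap t)
      = map B.μ.toLinearMap A.α.toLinearMap (tmul2 B.lact A.mul s t) := by
  induction s using TensorProduct.induction_on with
  | zero => simp
  | add x y hx hy => simp only [map_add, LinearMap.map_add, LinearMap.add_apply, hx, hy]
  | tmul a b =>
    induction t using TensorProduct.induction_on with
    | zero => simp
    | add x y hx hy => simp only [map_add, LinearMap.map_add, LinearMap.add_apply, hx, hy]
    | tmul x c => simp [← A.alpha_mul, ← B.mu_lact]

lemma sigma_lact (g : H) (m : M) :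
    B.sigma (B.lact g m) = tmul2 B.lact A.mul (A.comul g) (B.sigma m) := by
  apply map_equiv_cancel B.μ A.α
  have hc := B.sigma_cov g A.one m
  rw [A.alpha_one, B.ract_one, B.sigma_mu, A.comul_one, t2_ract_one', A.comul_alpha,
    t2_lact_mul_alpha] at hc
  exact hc

lemma rho_mu_inv (m : M) :
    B.rho (B.μ.symm m) = map A.α.symm.toLinearMap B.μ.symm.toLinearMap (B.rho m) := by
  apply map_equiv_cancel A.α B.μ
  rw [← B.rho_mu, LinearEquiv.apply_symm_apply]
  exact (map_symm_map A.α.symm B.μ.symm (B.rho m)).symm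

lemma mu_lact_inv (h : H) (x : M) :
    B.μ.symm (B.lact h x) = B.lact (A.α.symm h) (B.μ.symm x) := by
  apply B.μ.injective
  rw [LinearEquiv.apply_symm_apply, B.mu_lact]
  simp

noncomputable def qm : M →ₗ[k] M := TensorProduct.lift (B.lact ∘ₗ A.S) ∘ₗ B.rho

lemma qm_apply (m : M) :
    qm A B m = TensorProduct.lift (B.lact ∘ₗ A.S) (B.rho m) := rfl

lemma comul_S_comp_alpha :
    A.comul ∘ₗ (A.S ∘ₗ A.α.toLinearMap)
      = ((map A.α.toLinearMap A.α.toLinearMap) ∘ₗ (TensorProduct.comm k H H).toLinearMap ∘ₗ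
          (map A.S A.S)) ∘ₗ A.comul := by
  apply LinearMap.ext; intro g
  simp only [LinearMap.comp_apply, LinearEquiv.coe_coe]
  rw [A.S_alpha, A.comul_alpha, comul_S]

lemma rid_map_left {P Q : Type*} [AddCommGroup P] [Module k P] [AddCommGroup Q] [Module k Q]
    (f : P →ₗ[k] Q) (z : P ⊗[k] k) :
    (TensorProduct.rid k Q) (map f LinearMap.id z) = f ((TensorProduct.rid k P) z) := by
  induction z using TensorProduct.induction_on with
  | zero => simp
  | tmul a c => simp
  | add x y hx hy => simp only [map_add, LinearEquiv.map_add, hx, hy]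

-- inner collapse for the coinvariance proof
lemma SUB5b (w : H ⊗[k] H) (p : H) (y : M) :
    TensorProduct.lift (tmul2 A.mul B.lact)
      ((TensorProduct.assoc k (H ⊗[k] H) H M)
        (((map ((map A.α.toLinearMap A.α.toLinearMap) ∘ₗ (TensorProduct.comm k H H).toLinearMap ∘ₗ
            (map A.S A.S)) LinearMap.id)
          ((map LinearMap.id A.α.toLinearMap)
            ((TensorProduct.assoc k H H H).symm (p ⊗ₜ[k] w)))) ⊗ₜ[k] y))
      = (A.α (TensorProduct.lift A.mul ((map A.S LinearMap.id) w)))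
          ⊗ₜ[k] (B.lact (A.α (A.S p)) y) := by
  induction w using TensorProduct.induction_on with
  | zero => simp
  | add x z hx hz =>
    simp only [TensorProduct.tmul_add, map_add, LinearEquiv.map_add, TensorProduct.add_tmul,
      hx, hz]
  | tmul w1 w2 =>
    simp only [assoc_symm_tmul, map_tmul, LinearMap.id_apply, LinearMap.comp_apply,
      LinearEquiv.coe_coe, comm_tmul, assoc_tmul, lift.tmul, tmul2_tmul]
    rw [← A.alpha_mul]

lemma SUB5 (s : H ⊗[k] H) (y : M) :
    TensorProduct.lift (tmul2 A.mul B.lact)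
      ((TensorProduct.assoc k (H ⊗[k] H) H M)
        (((map ((map A.α.toLinearMap A.α.toLinearMap) ∘ₗ (TensorProduct.comm k H H).toLinearMap ∘ₗ
            (map A.S A.S)) LinearMap.id)
          ((map LinearMap.id A.α.toLinearMap)
            ((TensorProduct.assoc k H H H).symm ((map LinearMap.id A.comul) s)))) ⊗ₜ[k] y))
      = A.one ⊗ₜ[k]
          (B.lact (A.α (A.S ((TensorProduct.rid k H) ((map LinearMap.id A.counit) s)))) y) := by
  induction s using TensorProduct.induction_on with
  | zero => simp
  | add x z hx hz =>
    simp only [map_add, LinearEquiv.map_add, TensorProduct.add_tmul, TensorProduct.tmul_add,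
      LinearMap.map_add, LinearMap.add_apply, hx, hz]
  | tmul p r =>
    rw [show (map LinearMap.id A.comul) (p ⊗ₜ[k] r) = p ⊗ₜ[k] A.comul r from by simp]
    rw [SUB5b A B (A.comul r) p y, A.antipode_left, map_smul, A.alpha_one]
    simp only [map_tmul, LinearMap.id_apply, rid_tmul, map_smul, LinearEquiv.map_smul,
      LinearMap.map_smul]
    simp only [LinearMap.smul_apply, TensorProduct.tmul_smul, TensorProduct.smul_tmul']

lemma rho_qm (m : M) : B.rho (qm A B m) = A.one ⊗ₜ[k] B.μ.symm (qm A B m) := by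
  -- step 1: rho ∘ lift(lact∘S) = Γ ∘ (map id rho)
  have SL2 : ∀ t : H ⊗[k] M,
      B.rho (TensorProduct.lift (B.lact ∘ₗ A.S) t)
        = TensorProduct.lift (tmul2 A.mul B.lact)
            ((map (A.comul ∘ₗ A.S) LinearMap.id) ((map LinearMap.id B.rho) t)) := by
    intro t
    induction t using TensorProduct.induction_on with
    | zero => simp
    | add x y hx hy => simp only [map_add, hx, hy]
    | tmul a x =>
      simp only [map_tmul, LinearMap.comp_apply, LinearMap.id_apply, lift.tmul]
      rw [rho_lact]
  have MAIN : ∀ t : H ⊗[k] M,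
      TensorProduct.lift (tmul2 A.mul B.lact)
        ((map (A.comul ∘ₗ A.S) LinearMap.id)
          ((TensorProduct.assoc k H H M)
            ((map ((map A.α.toLinearMap LinearMap.id) ∘ₗ A.comul) B.μ.symm.toLinearMap) t)))
        = A.one ⊗ₜ[k] B.μ.symm (TensorProduct.lift (B.lact ∘ₗ A.S) t) := by
    intro t
    induction t using TensorProduct.induction_on with
    | zero => simp
    | add x y hx hy => simp only [map_add, LinearEquiv.map_add, TensorProduct.tmul_add, hx, hy]
    | tmul g x =>
      -- naturality: move (map (comul∘S) id) inside the assoc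
      rw [show (map ((map A.α.toLinearMap LinearMap.id) ∘ₗ A.comul) B.μ.symm.toLinearMap)
            (g ⊗ₜ[k] x)
          = ((map A.α.toLinearMap LinearMap.id) (A.comul g)) ⊗ₜ[k] (B.μ.symm x) from by simp]
      rw [show (map (A.comul ∘ₗ A.S) LinearMap.id)
            ((TensorProduct.assoc k H H M)
              (((map A.α.toLinearMap LinearMap.id) (A.comul g)) ⊗ₜ[k] (B.μ.symm x)))
          = (TensorProduct.assoc k (H ⊗[k] H) H M)
              ((map (map (A.comul ∘ₗ A.S) LinearMap.id) LinearMap.id)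
                (((map A.α.toLinearMap LinearMap.id) (A.comul g)) ⊗ₜ[k] (B.μ.symm x))) from by
        rw [← TensorProduct.map_map_assoc]
        simp [TensorProduct.map_id]]
      rw [show (map (map (A.comul ∘ₗ A.S) LinearMap.id) LinearMap.id)
            (((map A.α.toLinearMap LinearMap.id) (A.comul g)) ⊗ₜ[k] (B.μ.symm x))
          = ((map (A.comul ∘ₗ (A.S ∘ₗ A.α.toLinearMap)) LinearMap.id) (A.comul g))
              ⊗ₜ[k] (B.μ.symm x) from by
        simp only [map_tmul, LinearMap.id_apply]
        rw [map_apply_map]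
        simp only [LinearMap.id_comp]
        rfl]
      rw [comul_S_comp_alpha A]
      rw [show (map (((map A.α.toLinearMap A.α.toLinearMap) ∘ₗ
              (TensorProduct.comm k H H).toLinearMap ∘ₗ (map A.S A.S)) ∘ₗ A.comul)
            LinearMap.id) (A.comul g)
          = (map ((map A.α.toLinearMap A.α.toLinearMap) ∘ₗ
              (TensorProduct.comm k H H).toLinearMap ∘ₗ (map A.S A.S)) LinearMap.id)
              ((map A.comul LinearMap.id) (A.comul g)) from by
        rw [map_apply_map]
        simp only [LinearMap.id_comp]]
      rw [T1 A g]
      rw [show (map A.α.symm.toLinearMap A.comul) (A.comul g)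
          = (map LinearMap.id A.comul) ((map A.α.symm.toLinearMap LinearMap.id) (A.comul g))
            from by rw [map_apply_map]; simp only [LinearMap.id_comp, LinearMap.comp_id]]
      rw [SUB5 A B ((map A.α.symm.toLinearMap LinearMap.id) (A.comul g)) (B.μ.symm x)]
      rw [show (map LinearMap.id A.counit) ((map A.α.symm.toLinearMap LinearMap.id) (A.comul g))
          = (map A.α.symm.toLinearMap LinearMap.id) ((map LinearMap.id A.counit) (A.comul g))
            from by rw [map_apply_map, map_apply_map]; simp only [LinearMap.id_comp, LinearMap.comp_id]]
      rw [rid_map_left, A.counit_comul_right]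
      simp only [LinearEquiv.coe_coe]
      rw [S_alpha_inv, S_alpha_inv]
      rw [show A.α (A.α.symm (A.α.symm (A.S g))) = A.α.symm (A.S g) from by simp]
      rw [← mu_lact_inv]
      simp only [lift.tmul, LinearMap.comp_apply]
  rw [qm_apply, SL2 (B.rho m), ← qm_apply]
  rw [B.rho_coassoc m]
  exact MAIN (B.rho m)

lemma SUB6 (s : H ⊗[k] H) (y : M) :
    TensorProduct.lift B.lact ((map LinearMap.id (TensorProduct.lift (B.lact ∘ₗ A.S)))
      ((TensorProduct.assoc k H H M) (((map A.α.toLinearMap LinearMap.id) s) ⊗ₜ[k] y)))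
      = B.lact (TensorProduct.lift A.mul ((map LinearMap.id A.S) s)) (B.μ y) := by
  induction s using TensorProduct.induction_on with
  | zero => simp
  | add x z hx hz =>
    simp only [map_add, LinearEquiv.map_add, TensorProduct.add_tmul, LinearMap.map_add,
      LinearMap.add_apply, hx, hz]
  | tmul a b =>
    simp only [map_tmul, LinearMap.id_apply, assoc_tmul, lift.tmul, LinearMap.comp_apply,
      LinearEquiv.coe_coe]
    rw [B.lact_assoc]

lemma theta_qm (m : M) :
    TensorProduct.lift B.lact ((map LinearMap.id (qm A B)) (B.rho m)) = m := by
  rw [show (map LinearMap.id (qm A B)) (B.rho m)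
      = (map LinearMap.id (TensorProduct.lift (B.lact ∘ₗ A.S)))
          ((map LinearMap.id B.rho) (B.rho m)) from by
    rw [map_apply_map]; simp only [LinearMap.id_comp]; rfl]
  rw [B.rho_coassoc m]
  have MAIN : ∀ t : H ⊗[k] M,
      TensorProduct.lift B.lact ((map LinearMap.id (TensorProduct.lift (B.lact ∘ₗ A.S)))
        ((TensorProduct.assoc k H H M)
          ((map ((map A.α.toLinearMap LinearMap.id) ∘ₗ A.comul) B.μ.symm.toLinearMap) t)))
        = B.μ ((TensorProduct.lid k M) ((map A.counit LinearMap.id) t)) := by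
    intro t
    induction t using TensorProduct.induction_on with
    | zero => simp
    | add x y hx hy => simp only [map_add, LinearEquiv.map_add, hx, hy]
    | tmul g x =>
      rw [show (map ((map A.α.toLinearMap LinearMap.id) ∘ₗ A.comul) B.μ.symm.toLinearMap)
            (g ⊗ₜ[k] x)
          = ((map A.α.toLinearMap LinearMap.id) (A.comul g)) ⊗ₜ[k] (B.μ.symm x) from by simp]
      rw [SUB6 A B (A.comul g) (B.μ.symm x), A.antipode_right, LinearEquiv.apply_symm_apply]
      simp only [map_tmul, LinearMap.id_apply, lid_tmul, LinearMap.map_smul,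
        LinearEquiv.map_smul]
      simp only [LinearMap.smul_apply]
      rw [B.lact_one]
  rw [MAIN (B.rho m), B.rho_counit, LinearEquiv.apply_symm_apply]

end ThetaProofAux
namespace ThetaProofAux

open TensorProduct LinearMap

variable {k H : Type*} [CommRing k] [AddCommGroup H] [Module k H] (A : MonHomHopf k H)
variable {M : Type*} [AddCommGroup M] [Module k M] (B : BicovBimod A M)

lemma mem_coinv {x : M} : x ∈ B.coinv ↔ B.rho x = A.one ⊗ₜ[k] B.μ.symm x := Iff.rfl

lemma coinv_mu_inv {u : M} (hu : B.rho u = A.one ⊗ₜ[k] B.μ.symm u) :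
    B.rho (B.μ.symm u) = A.one ⊗ₜ[k] B.μ.symm (B.μ.symm u) := by
  rw [rho_mu_inv, hu]
  simp only [map_tmul, LinearEquiv.coe_coe]
  rw [alpha_one_inv]

lemma SL6 (s : H ⊗[k] H) (y : M) :
    tmul2 A.mul B.lact s (A.one ⊗ₜ[k] y) = (map A.α.toLinearMap (B.lact.flip y)) s := by
  induction s using TensorProduct.induction_on with
  | zero => simp
  | add p q hp hq => simp only [map_add, LinearMap.add_apply, hp, hq]
  | tmul a b => simp [A.mul_one']

lemma rho_lact_coinv (g : H) {u : M} (hu : B.rho u = A.one ⊗ₜ[k] B.μ.symm u) :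
    B.rho (B.lact g u) = (map A.α.toLinearMap (B.lact.flip (B.μ.symm u))) (A.comul g) := by
  rw [rho_lact, hu, SL6]

lemma SL8 (s : H ⊗[k] H) (y : M) :
    TensorProduct.lift (B.lact ∘ₗ A.S) ((map A.α.toLinearMap (B.lact.flip y)) s)
      = B.lact (TensorProduct.lift A.mul ((map A.S LinearMap.id) s)) (B.μ y) := by
  induction s using TensorProduct.induction_on with
  | zero => simp
  | add p q hp hq =>
    simp only [map_add, LinearMap.map_add, LinearMap.add_apply, hp, hq]
  | tmul a b =>
    simp only [map_tmul, lift.tmul, LinearMap.comp_apply, LinearMap.flip_apply,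
      LinearEquiv.coe_coe, LinearMap.id_apply]
    rw [A.S_alpha, B.lact_assoc]

lemma qm_lact_coinv (g : H) {u : M} (hu : B.rho u = A.one ⊗ₜ[k] B.μ.symm u) :
    qm A B (B.lact g (B.μ.symm u)) = A.counit g • u := by
  rw [qm_apply, rho_lact_coinv A B g (coinv_mu_inv A B hu), SL8, A.antipode_left,
    LinearEquiv.apply_symm_apply]
  simp only [LinearMap.map_smul, LinearMap.smul_apply]
  rw [B.lact_one, LinearEquiv.apply_symm_apply]

noncomputable def qc : M →ₗ[k] ↥(B.coinv) :=
  (qm A B).codRestrict B.coinv (fun m => (mem_coinv A B).mpr (rho_qm A B m))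

lemma qc_coe (m : M) : ((qc A B m : ↥(B.coinv)) : M) = qm A B m := rfl

noncomputable def Psi : M →ₗ[k] H ⊗[k] ↥(B.coinv) :=
  (map LinearMap.id (qc A B)) ∘ₗ B.rho

lemma theta_map_qc (t : H ⊗[k] M) :
    B.theta ((map LinearMap.id (qc A B)) t)
      = TensorProduct.lift B.lact ((map LinearMap.id (qm A B)) t) := by
  induction t using TensorProduct.induction_on with
  | zero => simp
  | add x y hx hy => simp only [map_add, hx, hy]
  | tmul a x =>
    simp only [map_tmul, LinearMap.id_apply, BicovBimod.theta, lift.tmul,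
      LinearMap.compl₂_apply, Submodule.coe_subtype]
    rfl

lemma theta_Psi (m : M) : B.theta (Psi A B m) = m := by
  rw [Psi, LinearMap.comp_apply, theta_map_qc, theta_qm]

lemma SL9 (u : ↥(B.coinv)) (s : H ⊗[k] H) :
    (map A.α.toLinearMap (LinearMap.smulRight A.counit u)) s
      = (A.α ((TensorProduct.rid k H) ((map LinearMap.id A.counit) s))) ⊗ₜ[k] u := by
  induction s using TensorProduct.induction_on with
  | zero => simp
  | add p q hp hq =>
    simp only [map_add, LinearEquiv.map_add, TensorProduct.add_tmul, hp, hq]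
  | tmul a b =>
    simp only [map_tmul, LinearMap.smulRight_apply, LinearMap.id_apply, rid_tmul,
      LinearEquiv.coe_coe, LinearEquiv.map_smul]
    rw [TensorProduct.tmul_smul, TensorProduct.smul_tmul']

lemma Psi_theta (g : H) (u : ↥(B.coinv)) :
    Psi A B (B.theta (g ⊗ₜ[k] u)) = g ⊗ₜ[k] u := by
  have hth : B.theta (g ⊗ₜ[k] u) = B.lact g (u : M) := by
    simp only [BicovBimod.theta, lift.tmul, LinearMap.compl₂_apply, Submodule.coe_subtype]
  rw [hth, Psi, LinearMap.comp_apply,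
    rho_lact_coinv A B g ((mem_coinv A B).mp u.2), map_apply_map, LinearMap.id_comp]
  have hcomp : (qc A B) ∘ₗ (B.lact.flip (B.μ.symm (u : M)))
      = LinearMap.smulRight A.counit u := by
    apply LinearMap.ext; intro g'
    apply Subtype.ext
    simp only [LinearMap.comp_apply, LinearMap.flip_apply, LinearMap.smulRight_apply,
      SetLike.val_smul]
    rw [qc_coe, qm_lact_coinv A B g' ((mem_coinv A B).mp u.2)]
  rw [hcomp, SL9, A.counit_comul_right, LinearEquiv.apply_symm_apply]

lemma theta_bijective : Function.Bijective B.theta := by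
  constructor
  · have hleft : Function.LeftInverse (Psi A B) B.theta := by
      intro z
      induction z using TensorProduct.induction_on with
      | zero => simp
      | tmul g u => exact Psi_theta A B g u
      | add x y hx hy => simp only [map_add, hx, hy]
    exact hleft.injective
  · intro m
    exact ⟨Psi A B m, theta_Psi A B m⟩

end ThetaProofAux
/-- `θ(h ⊗ u) = h·u` is right `H`-colinear, i.e.
`σ(h·u) = h₁·u_[0] ⊗ h₂ u_[1]` for coinvariant `u`, and (being bijective) is an isomorphism
of bicovariant Hom-bimodules. -/
theorem theta_bicovariant_isomorphism {k H : Type*} [CommRing k] [AddCommGroup H] [Module k H]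
    (A : MonHomHopf k H) {M : Type*} [AddCommGroup M] [Module k M]
    (B : BicovBimod A M) :
    (∀ h : H, ∀ u : M, B.rho u = A.one ⊗ₜ[k] (B.μ.symm u) →
      B.sigma (B.lact h u) = tmul2 B.lact A.mul (A.comul h) (B.sigma u)) ∧
    Function.Bijective B.theta := by
  exact ⟨fun h u _ => ThetaProofAux.sigma_lact A B h u, ThetaProofAux.theta_bijective A B⟩
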